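/- Let G be a multigraph, let xy be a multiedge of G whose set of parallel edges is D, and let H be obtained from G by m-subdividing xy, with new vertex v and with D_x and D_y the sets of parallel edges between x,v and between v,y respectively (|D_x| = |D_y| = |D|). Let λ be a timefunction on G and let λ′ be any timefunction on H with λ′(e) = λ(e) for every e ∈ E(G)∖D and with label sets λ′(D_x) = λ′(D_y) = λ(D). Then for every pair of distinct vertices s,z ∈ V(G), maxD(G,λ,s,z) = maxD(H,λ′,s,z) and minC(G,λ,s,z) = minC(H,λ′,s,z). -/

import Mathlib

/-- A (finite, loopless) multigraph: a vertex type, an edge type, and an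
endpoints function assigning to each edge an unordered pair of distinct vertices. -/
structure Multigraph where
  V : Type
  E : Type
  fintypeV : Fintype V
  decEqV : DecidableEq V
  fintypeE : Fintype E
  decEqE : DecidableEq E
  ends : E → Sym2 V
  loopless : ∀ e, ¬ (ends e).IsDiag

attribute [instance] Multigraph.fintypeV Multigraph.decEqV Multigraph.fintypeE Multigraph.decEqE

/-- A temporal `s,z`-path in the temporal graph `(G, lam)`: an alternating sequence of
pairwise distinct vertices and edges, starting at `s`, ending at `z`, whose edges appear
at non-decreasing timesteps. -/
structure TPath (G : Multigraph) (lam : G.E → ℕ) (s z : G.V) where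
  verts : List G.V
  edges : List G.E
  len_eq : verts.length = edges.length + 1
  head_eq : verts.head? = some s
  last_eq : verts.getLast? = some z
  nodup : verts.Nodup
  ends_eq : ∀ (i : ℕ) (h : i < edges.length),
      G.ends (edges.get ⟨i, h⟩) = s(verts.get ⟨i, by omega⟩, verts.get ⟨i + 1, by omega⟩)
  mono : List.Chain' (· ≤ ·) (edges.map lam)

/-- The set of timesteps at which a temporal path is active. -/
def TPath.times {G : Multigraph} {lam : G.E → ℕ} {s z : G.V} (P : TPath G lam s z) : Set ℕ :=
  {t | ∃ e ∈ P.edges, lam e = t}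

/-- Two temporal `s,z`-paths are snapshot disjoint if they are not both active at any
common timestep. -/
def SnapDisjoint {G : Multigraph} {lam : G.E → ℕ} {s z : G.V} (P Q : TPath G lam s z) : Prop :=
  P.times ∩ Q.times = ∅

/-- A set `S` of timesteps is a snapshot `s,z`-cut if every temporal `s,z`-path uses an
edge active at some timestep in `S`. -/
def IsSnapCut (G : Multigraph) (lam : G.E → ℕ) (s z : G.V) (S : Set ℕ) : Prop :=
  ∀ P : TPath G lam s z, ∃ e ∈ P.edges, lam e ∈ S

/-- `maxD G lam s z`: the maximum number of pairwise snapshot disjoint temporal `s,z`-paths. -/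
noncomputable def maxD (G : Multigraph) (lam : G.E → ℕ) (s z : G.V) : ℕ :=
  sSup {k | ∃ f : Fin k → TPath G lam s z, ∀ i j, i ≠ j → SnapDisjoint (f i) (f j)}

/-- `minC G lam s z`: the minimum size of a snapshot `s,z`-cut. -/
noncomputable def minC (G : Multigraph) (lam : G.E → ℕ) (s z : G.V) : ℕ :=
  sInf {h | ∃ S : Finset ℕ, S.card = h ∧ IsSnapCut G lam s z ↑S}

/-- A proper timefunction: each edge is active at a positive timestep, and no two parallel
edges are active at the same timestep. -/
def ProperTime (G : Multigraph) (lam : G.E → ℕ) : Prop :=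
  (∀ e, 0 < lam e) ∧ ∀ e f, e ≠ f → G.ends e = G.ends f → lam e ≠ lam f

/-- `G` is Mengerian for time: for every proper timefunction and every pair of distinct
vertices, the maximum number of pairwise snapshot disjoint temporal `s,z`-paths equals the
minimum size of a snapshot `s,z`-cut. -/
def Mengerian (G : Multigraph) : Prop :=
  ∀ lam : G.E → ℕ, ProperTime G lam → ∀ s z : G.V, s ≠ z →
    maxD G lam s z = minC G lam s z

/-- `H` is a subgraph of `G` (up to isomorphism): `H` embeds into `G`. -/
def IsSubgraph (H G : Multigraph) : Prop :=
  ∃ (fv : H.V → G.V) (fe : H.E → G.E),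
    Function.Injective fv ∧ Function.Injective fe ∧
    ∀ e, G.ends (fe e) = (H.ends e).map fv

/-- The m-subdivision of the multiedge `xy` of `G`: delete all edges between `x` and `y`,
add a new vertex (`none`), and join it to each of `x` and `y` by as many parallel edges as
there were between `x` and `y`. -/
def Multigraph.msubdiv (G : Multigraph) (x y : G.V) : Multigraph where
  V := Option G.V
  E := {e : G.E // G.ends e ≠ s(x, y)} ⊕ ({e : G.E // G.ends e = s(x, y)} × Bool)
  fintypeV := inferInstance
  decEqV := inferInstance
  fintypeE := inferInstance
  decEqE := inferInstance
  ends := fun t =>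
    match t with
    | .inl e => (G.ends e.1).map some
    | .inr (_, true) => s(some x, (none : Option G.V))
    | .inr (_, false) => s((none : Option G.V), some y)
  loopless := by
    rintro (⟨e, he⟩ | ⟨e, b⟩)
    · simpa [Sym2.isDiag_map (Option.some_injective _)] using G.loopless e
    · cases b <;> simp [Sym2.mk_isDiag_iff]

/-- Isomorphism of multigraphs. -/
def MIso (G H : Multigraph) : Prop :=
  ∃ (fv : G.V ≃ H.V) (fe : G.E ≃ H.E), ∀ e, H.ends (fe e) = (G.ends e).map fv

/-- `B` is obtained from `A` by m-subdividing one of its multiedges. -/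
def SubdivStep (A B : Multigraph) : Prop :=
  ∃ x y : A.V, (∃ e, A.ends e = s(x, y)) ∧ MIso (A.msubdiv x y) B

/-- `H` is an m-topological minor of `G`: some subgraph of `G` can be obtained from `H` by
a sequence of m-subdivisions. -/
def IsMTopMinor (H G : Multigraph) : Prop :=
  ∃ K, Relation.ReflTransGen SubdivStep H K ∧ IsSubgraph K G

/-- The multigraph obtained from `G` by keeping only the edges satisfying `P`. -/
def Multigraph.restrictE (G : Multigraph) (P : G.E → Prop) [DecidablePred P] : Multigraph where
  V := G.V
  E := {e : G.E // P e}
  fintypeV := G.fintypeV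
  decEqV := G.decEqV
  fintypeE := inferInstance
  decEqE := inferInstance
  ends := fun e => G.ends e.1
  loopless := fun e => G.loopless e.1

/-- The underlying simple graph of a multigraph. -/
def Multigraph.simple (G : Multigraph) : SimpleGraph G.V where
  Adj u v := ∃ e, G.ends e = s(u, v)
  symm := by
    constructor
    rintro u v ⟨e, he⟩
    exact ⟨e, by rw [he, Sym2.eq_swap]⟩
  loopless := by
    constructor
    rintro u ⟨e, he⟩
    exact G.loopless e (by rw [he]; exact Sym2.mk_isDiag_iff.2 rfl)

/-! Every temporal `s,z`-path of either temporal graph can be turned into one of the other that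
is active only at timesteps the original uses. A path of `(G, λ)` crossing an edge of `xy` at
time `t` detours through the new vertex along edges of `D_x` and `D_y` both active at `t`; a path
of `(H, λ')` through the new vertex is shortcut by an edge of `xy` active when the path leaves
it, which keeps the timesteps non-decreasing. Such a transformation keeps snapshot disjoint paths
snapshot disjoint and pulls snapshot cuts back to snapshot cuts, so `maxD` and `minC` can only
grow along it; applying it in both directions gives the equalities. -/

namespace Multigraph

/-- A walk from `u` to `z`, recorded as its list of steps `(edge, vertex reached)`. -/
inductive IsWalk (G : Multigraph) : G.V → G.V → List (G.E × G.V) → Prop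
  | nil (u : G.V) : G.IsWalk u u []
  | cons {u w z : G.V} {e : G.E} {l : List (G.E × G.V)} :
      G.ends e = s(u, w) → G.IsWalk w z l → G.IsWalk u z ((e, w) :: l)

variable {G H : Multigraph}

theorem isWalk_iff {u z : G.V} {l : List (G.E × G.V)} :
    G.IsWalk u z l ↔
      (∀ (i : ℕ) (h : i < l.length),
        G.ends l[i].1 =
          s((u :: l.map Prod.snd)[i]'(by simp; omega), (l.map Prod.snd)[i]'(by simpa))) ∧
      (u :: l.map Prod.snd).getLast? = some z := by
  induction l generalizing u with
  | nil => exact ⟨by rintro ⟨⟩; simp, fun ⟨_, h⟩ => by cases h; exact .nil u⟩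
  | cons p l ih =>
    obtain ⟨e, w⟩ := p
    simp only [List.length_cons, List.map_cons, List.getLast?_cons_cons]
    constructor
    · rintro (_ | ⟨he, hl⟩)
      refine ⟨fun i hi => ?_, (ih.1 hl).2⟩
      cases i with
      | zero => exact he
      | succ i => exact (ih.1 hl).1 i (by omega)
    · rintro ⟨hends, hl⟩
      exact .cons (hends 0 (by omega)) (ih.2 ⟨fun i hi => hends (i + 1) (by omega), hl⟩)

theorem IsWalk.append {u v w : G.V} {l₁ l₂ : List (G.E × G.V)} (h₁ : G.IsWalk u v l₁)
    (h₂ : G.IsWalk v w l₂) : G.IsWalk u w (l₁ ++ l₂) := by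
  induction h₁ with
  | nil => exact h₂
  | cons he _ ih => exact .cons he (ih h₂)

theorem IsWalk.flatMap {u z : G.V} {l : List (G.E × G.V)} (φ : G.V → H.V)
    {g : G.E × G.V → List (H.E × H.V)}
    (hg : ∀ u e w, G.ends e = s(u, w) → H.IsWalk (φ u) (φ w) (g (e, w)))
    (h : G.IsWalk u z l) : H.IsWalk (φ u) (φ z) (l.flatMap g) := by
  induction h with
  | nil => exact .nil _
  | cons he _ ih => exact (hg _ _ _ he).append ih

theorem IsWalk.mem_of_mem_ends {u z a : G.V} {l : List (G.E × G.V)} (h : G.IsWalk u z l)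
    {p : G.E × G.V} (hp : p ∈ l) (ha : a ∈ G.ends p.1) : a ∈ u :: l.map Prod.snd := by
  induction h with
  | nil => simp at hp
  | @cons u w _ e _ he _ ih =>
    rcases List.mem_cons.1 hp with rfl | hp
    · rw [he, Sym2.mem_iff] at ha
      rcases ha with rfl | rfl <;> simp
    · exact List.mem_cons_of_mem _ (ih hp)

theorem IsWalk.pairwise_ends_ne {u z : G.V} {l : List (G.E × G.V)} (h : G.IsWalk u z l)
    (hnd : (u :: l.map Prod.snd).Nodup) : l.Pairwise (fun p q => G.ends p.1 ≠ G.ends q.1) := by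
  induction h with
  | nil => exact .nil
  | @cons u w _ e l he hl ih =>
    rw [List.map_cons, List.nodup_cons] at hnd
    refine .cons (fun q hq hends => hnd.1 ?_) (ih hnd.2)
    exact hl.mem_of_mem_ends hq (by rw [← hends, he]; exact Sym2.mem_mk_left u w)

end Multigraph

structure IsTemporalPath (G : Multigraph) (lam : G.E → ℕ) (s z : G.V)
    (l : List (G.E × G.V)) : Prop where
  isWalk : G.IsWalk s z l
  nodup : (s :: l.map Prod.snd).Nodup
  sorted : (l.map (lam ∘ Prod.fst)).Pairwise (· ≤ ·)

section TemporalPath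

variable {G : Multigraph} {lam : G.E → ℕ} {s z : G.V}

theorem IsTemporalPath.exists_tPath {l : List (G.E × G.V)} (h : IsTemporalPath G lam s z l) :
    ∃ P : TPath G lam s z, P.times = {t | t ∈ l.map (lam ∘ Prod.fst)} := by
  obtain ⟨hends, hlast⟩ := Multigraph.isWalk_iff.1 h.isWalk
  refine ⟨⟨s :: l.map Prod.snd, l.map Prod.fst, by simp, rfl, hlast, h.nodup,
    fun i hi => ?_, ?_⟩, ?_⟩
  · simpa using hends i (by simpa using hi)
  · rw [List.map_map]; exact h.sorted.isChain
  · ext t; simp [TPath.times]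

theorem TPath.exists_isTemporalPath (P : TPath G lam s z) :
    ∃ l, IsTemporalPath G lam s z l ∧ P.times = {t | t ∈ l.map (lam ∘ Prod.fst)} := by
  obtain ⟨vs, hvs⟩ := List.head?_eq_some_iff.1 P.head_eq
  have hlen : vs.length = P.edges.length := by simpa [hvs] using P.len_eq
  have hfst : (P.edges.zip vs).map Prod.fst = P.edges := List.map_fst_zip hlen.ge
  have hsnd : (P.edges.zip vs).map Prod.snd = vs := List.map_snd_zip hlen.le
  refine ⟨P.edges.zip vs, ⟨Multigraph.isWalk_iff.2 ⟨fun i hi => ?_, ?_⟩, ?_, ?_⟩, ?_⟩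
  · have := P.ends_eq i (by simp at hi; omega)
    simp only [List.get_eq_getElem, hvs] at this
    simpa [hsnd] using this
  · simpa [hsnd, hvs] using P.last_eq
  · simpa [hsnd, hvs] using P.nodup
  · rw [← List.map_map, hfst]
    exact List.isChain_iff_pairwise.1 P.mono
  · ext t; simp [TPath.times, ← List.map_map, hfst]

theorem TPath.exists_times_subset {H : Multigraph} {mu : H.E → ℕ} {s' z' : H.V}
    (h : ∀ l, IsTemporalPath G lam s z l →
      ∃ l', IsTemporalPath H mu s' z' l' ∧
        l'.map (mu ∘ Prod.fst) ⊆ l.map (lam ∘ Prod.fst))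
    (P : TPath G lam s z) : ∃ Q : TPath H mu s' z', Q.times ⊆ P.times := by
  obtain ⟨l, hl, hP⟩ := P.exists_isTemporalPath
  obtain ⟨l', hl', hsub⟩ := h l hl
  obtain ⟨Q, hQ⟩ := hl'.exists_tPath
  exact ⟨Q, by rw [hP, hQ]; exact fun t ht => hsub ht⟩

end TemporalPath

section Comparison

variable {G H : Multigraph} {lam : G.E → ℕ} {mu : H.E → ℕ} {s z : G.V} {s' z' : H.V}

theorem TPath.times_nonempty (hsz : s ≠ z) (P : TPath G lam s z) : P.times.Nonempty := by
  obtain ⟨l, hl, hP⟩ := P.exists_isTemporalPath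
  rcases l with _ | ⟨p, l⟩
  · cases hl.isWalk
    exact absurd rfl hsz
  · exact ⟨lam p.1, by simp [hP]⟩

theorem bddAbove_card_snapDisjoint (hsz : s ≠ z) :
    BddAbove
      {k | ∃ f : Fin k → TPath G lam s z, ∀ i j, i ≠ j → SnapDisjoint (f i) (f j)} := by
  refine ⟨(Finset.univ.image lam).card, ?_⟩
  rintro k ⟨f, hf⟩
  choose t ht using fun i => (f i).times_nonempty hsz
  have ht_inj : Function.Injective t := fun i j hij => by
    by_contra hne
    exact (Set.eq_empty_iff_forall_notMem.1 (hf i j hne)) (t i) ⟨ht i, hij ▸ ht j⟩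
  have ht_mem : ∀ i, t i ∈ Finset.univ.image lam := fun i => by
    obtain ⟨e, -, he⟩ := ht i
    exact Finset.mem_image.2 ⟨e, Finset.mem_univ e, he⟩
  simpa using Finset.card_le_card_of_injOn (s := Finset.univ) t (fun i _ => ht_mem i) ht_inj.injOn

theorem isSnapCut_image_univ (hsz : s ≠ z) : IsSnapCut G lam s z ↑(Finset.univ.image lam) :=
  fun P => by
    obtain ⟨t, e, he, rfl⟩ := P.times_nonempty hsz
    exact ⟨e, he, by simp⟩

theorem maxD_le_maxD (hsz' : s' ≠ z')
    (h : ∀ P : TPath G lam s z, ∃ Q : TPath H mu s' z', Q.times ⊆ P.times) :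
    maxD G lam s z ≤ maxD H mu s' z' := by
  choose F hF using h
  refine csSup_le_csSup (bddAbove_card_snapDisjoint hsz') ⟨0, finZeroElim, finZeroElim⟩ ?_
  rintro k ⟨f, hf⟩
  refine ⟨fun i => F (f i), fun i j hij => Set.subset_empty_iff.1 ?_⟩
  exact (Set.inter_subset_inter (hF (f i)) (hF (f j))).trans (hf i j hij).subset

theorem minC_le_minC (hsz' : s' ≠ z')
    (h : ∀ P : TPath G lam s z, ∃ Q : TPath H mu s' z', Q.times ⊆ P.times) :
    minC G lam s z ≤ minC H mu s' z' := by
  obtain ⟨S, hcard, hS⟩ := Nat.sInf_mem (s := {k | ∃ S : Finset ℕ, S.card = k ∧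
    IsSnapCut H mu s' z' ↑S}) ⟨_, _, rfl, isSnapCut_image_univ hsz'⟩
  refine Nat.sInf_le ⟨S, hcard, fun P => ?_⟩
  obtain ⟨Q, hQ⟩ := h P
  obtain ⟨e, he, heS⟩ := hS Q
  obtain ⟨e', he', he'e⟩ := hQ ⟨e, he, rfl⟩
  exact ⟨e', he', he'e ▸ heS⟩

end Comparison

namespace Multigraph

variable {G : Multigraph} {x y : G.V}

theorem msubdiv_ends_inr (d : {e : G.E // G.ends e = s(x, y)}) (b : Bool) :
    (G.msubdiv x y).ends (.inr (d, b)) = s(some (cond b x y), none) := by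
  cases b
  exacts [Sym2.eq_swap, rfl]

theorem none_notMem_msubdiv_ends_inl (e : {e : G.E // G.ends e ≠ s(x, y)}) :
    (none : Option G.V) ∉ (G.msubdiv x y).ends (.inl e) := fun h => by
  obtain ⟨_, _, h⟩ := Sym2.mem_map.1 h
  exact Option.some_ne_none _ h

theorem mem_of_msubdiv_ends_eq {m : (G.msubdiv x y).E} {u : G.V}
    (hm : (G.msubdiv x y).ends m = s(some u, none)) : u ∈ s(x, y) := by
  rcases m with e | ⟨d, b⟩
  · exact absurd (hm ▸ Sym2.mem_mk_right _ _) (none_notMem_msubdiv_ends_inl e)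
  · rw [msubdiv_ends_inr] at hm
    obtain ⟨hu, -⟩ | ⟨-, h⟩ := Sym2.eq_iff.1 hm
    · cases Option.some_injective _ hu
      cases b <;> simp
    · exact (Option.some_ne_none _ h.symm).elim

structure IsMSubdivTime (lam : G.E → ℕ) (lam' : (G.msubdiv x y).E → ℕ) : Prop where
  keep : ∀ (e : G.E) (h : G.ends e ≠ s(x, y)), lam' (Sum.inl ⟨e, h⟩) = lam e
  range_eq : ∀ b : Bool,
    Set.range (fun d : {e : G.E // G.ends e = s(x, y)} => lam' (Sum.inr (d, b)))
      = Set.range (fun d : {e : G.E // G.ends e = s(x, y)} => lam d.1)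

variable (lam : G.E → ℕ) (lam' : (G.msubdiv x y).E → ℕ)

noncomputable def subdivEdge (b : Bool) (d : {e : G.E // G.ends e = s(x, y)}) :
    (G.msubdiv x y).E :=
  haveI : Nonempty {e : G.E // G.ends e = s(x, y)} := ⟨d⟩
  .inr (Function.invFun (fun d' => lam' (.inr (d', b))) (lam d.1), b)

/-- The flag `true` selects `D_x`: a step to `y` along `xy` enters the new vertex from `x`. -/
noncomputable def subdivStep (p : G.E × G.V) : List ((G.msubdiv x y).E × Option G.V) :=
  if h : G.ends p.1 = s(x, y) then
    [(subdivEdge lam lam' (decide (p.2 = y)) ⟨p.1, h⟩, none),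
      (subdivEdge lam lam' (!decide (p.2 = y)) ⟨p.1, h⟩, some p.2)]
  else [(.inl ⟨p.1, h⟩, some p.2)]

noncomputable def contractEdge : (G.msubdiv x y).E → G.E
  | .inl e => e.1
  | .inr (d, b) =>
    haveI : Nonempty {e : G.E // G.ends e = s(x, y)} := ⟨d⟩
    (Function.invFun (fun d' : {e : G.E // G.ends e = s(x, y)} => lam d'.1)
      (lam' (.inr (d, b)))).1

/-- A step into the new vertex is dropped; the step out of it is replaced by an edge of `xy`
active at the same time. -/
noncomputable def contractSteps (l : List ((G.msubdiv x y).E × Option G.V)) :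
    List (G.E × G.V) :=
  l.filterMap fun p => p.2.map (contractEdge lam lam' p.1, ·)

variable {lam lam'}

theorem IsMSubdivTime.lam'_subdivEdge (hlam : IsMSubdivTime lam lam') (b : Bool)
    (d : {e : G.E // G.ends e = s(x, y)}) : lam' (subdivEdge lam lam' b d) = lam d.1 :=
  have : Nonempty {e : G.E // G.ends e = s(x, y)} := ⟨d⟩
  Function.invFun_eq (by rw [← Set.mem_range, hlam.range_eq b]; exact ⟨d, rfl⟩)

theorem IsMSubdivTime.lam_contractEdge (hlam : IsMSubdivTime lam lam')
    (m : (G.msubdiv x y).E) : lam (contractEdge lam lam' m) = lam' m := by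
  rcases m with e | ⟨d, b⟩
  · exact (hlam.keep e.1 e.2).symm
  · have : Nonempty {e : G.E // G.ends e = s(x, y)} := ⟨d⟩
    exact Function.invFun_eq (by rw [← Set.mem_range, ← hlam.range_eq b]; exact ⟨d, rfl⟩)

theorem isWalk_subdivStep {u w : G.V} {e : G.E} (he : G.ends e = s(u, w)) :
    (G.msubdiv x y).IsWalk (some u) (some w) (subdivStep lam lam' (e, w)) := by
  unfold subdivStep
  split_ifs with hxy
  · have hne : x ≠ y := fun h => G.loopless e (by rw [hxy, h]; exact Sym2.mk_isDiag_iff.2 rfl)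
    have ⟨hu, hw⟩ : u = cond (decide (w = y)) x y ∧ w = cond (!decide (w = y)) x y := by
      rcases Sym2.eq_iff.1 (he.symm.trans hxy) with ⟨rfl, rfl⟩ | ⟨rfl, rfl⟩ <;> simp [hne]
    refine .cons ?_ (.cons ?_ (.nil _))
    · rw [subdivEdge, msubdiv_ends_inr, ← hu]; rfl
    · rw [subdivEdge, msubdiv_ends_inr, ← hw, Sym2.eq_swap]; rfl
  · exact .cons (congrArg (Sym2.map some) he) (.nil _)

theorem map_snd_subdivStep (p : G.E × G.V) :
    (subdivStep lam lam' p).map Prod.snd =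
      if G.ends p.1 = s(x, y) then [none, some p.2] else [some p.2] := by
  unfold subdivStep
  split_ifs <;> rfl

theorem IsMSubdivTime.eq_of_mem_map_subdivStep (hlam : IsMSubdivTime lam lam')
    {p : G.E × G.V} {t : ℕ} (ht : t ∈ (subdivStep lam lam' p).map (lam' ∘ Prod.fst)) :
    t = lam p.1 := by
  obtain ⟨q, hq, rfl⟩ := List.mem_map.1 ht
  unfold subdivStep at hq
  split_ifs at hq with h
  · rcases List.mem_pair.1 hq with rfl | rfl <;> exact hlam.lam'_subdivEdge _ _
  · rw [List.mem_singleton.1 hq]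
    exact hlam.keep _ h

theorem IsMSubdivTime.sorted_flatMap_subdivStep (hlam : IsMSubdivTime lam lam')
    {l : List (G.E × G.V)} (h : (l.map (lam ∘ Prod.fst)).Pairwise (· ≤ ·)) :
    ((l.flatMap (subdivStep lam lam')).map (lam' ∘ Prod.fst)).Pairwise (· ≤ ·) := by
  rw [List.map_flatMap, List.pairwise_flatMap]
  refine ⟨fun p _ => List.pairwise_of_forall_mem_list fun a ha b hb => ?_,
    (List.pairwise_map.1 h).imp fun hpq a ha b hb => ?_⟩
  · rw [hlam.eq_of_mem_map_subdivStep ha, hlam.eq_of_mem_map_subdivStep hb]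
  · rw [hlam.eq_of_mem_map_subdivStep ha, hlam.eq_of_mem_map_subdivStep hb]
    exact hpq

theorem IsMSubdivTime.map_flatMap_subdivStep_subset (hlam : IsMSubdivTime lam lam')
    (l : List (G.E × G.V)) :
    (l.flatMap (subdivStep lam lam')).map (lam' ∘ Prod.fst) ⊆ l.map (lam ∘ Prod.fst) := by
  rw [List.map_flatMap]
  intro t ht
  obtain ⟨p, hp, ht⟩ := List.mem_flatMap.1 ht
  exact List.mem_map.2 ⟨p, hp, (hlam.eq_of_mem_map_subdivStep ht).symm⟩

theorem IsWalk.nodup_flatMap_subdivStep {s z : G.V} {l : List (G.E × G.V)} (h : G.IsWalk s z l)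
    (hnd : (s :: l.map Prod.snd).Nodup) :
    (some s :: (l.flatMap (subdivStep lam lam')).map Prod.snd).Nodup := by
  have hnd' := List.nodup_cons.1 hnd
  rw [List.map_flatMap, List.nodup_cons, List.nodup_flatMap]
  refine ⟨?_, fun p _ => ?_, ?_⟩
  · simp only [List.mem_flatMap, map_snd_subdivStep, not_exists, not_and]
    intro p hp hs
    refine hnd'.1 (List.mem_map.2 ⟨p, hp, ?_⟩)
    split_ifs at hs <;> simp_all
  · rw [map_snd_subdivStep]
    split_ifs <;> simp
  -- A path uses at most one edge of `xy`, so it meets the new vertex at most once.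
  · refine ((List.pairwise_map.1 hnd'.2).and (h.pairwise_ends_ne hnd)).imp ?_
    rintro p q ⟨hpq, hends⟩
    have hqp := Ne.symm hpq
    rw [Function.onFun, map_snd_subdivStep, map_snd_subdivStep]
    split_ifs <;> simp_all

theorem ends_contractEdge_inr (d : {e : G.E // G.ends e = s(x, y)}) (b : Bool) :
    G.ends (contractEdge lam lam' (.inr (d, b))) = s(x, y) := by
  dsimp only [contractEdge]
  exact Subtype.prop (p := fun e => G.ends e = s(x, y)) _

theorem ends_contractEdge {m : (G.msubdiv x y).E} {o : (G.msubdiv x y).V} {u w : G.V}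
    (hm : (G.msubdiv x y).ends m = s(o, some w))
    (hu : o = some u ∨ o = none ∧ u ∈ s(x, y) ∧ u ≠ w) :
    G.ends (contractEdge lam lam' m) = s(u, w) := by
  rcases m with e | ⟨d, b⟩
  · obtain rfl | ⟨rfl, -⟩ := hu
    · exact Sym2.map.injective (Option.some_injective _) hm
    · exact absurd (hm ▸ Sym2.mem_mk_left _ _) (none_notMem_msubdiv_ends_inl e)
  · rw [msubdiv_ends_inr] at hm
    obtain ⟨-, h⟩ | ⟨hw, rfl⟩ := Sym2.eq_iff.1 hm
    · exact (Option.some_ne_none _ h.symm).elim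
    · obtain ⟨-, hux, huw⟩ := hu.resolve_left (Option.some_ne_none _).symm
      refine (ends_contractEdge_inr d b).trans ((Sym2.mem_and_mem_iff huw).1 ⟨hux, ?_⟩)
      cases Option.some_injective _ hw
      cases b <;> simp

/-- For a walk starting at the new vertex, `u` is the vertex of `xy` it was entered from. -/
theorem IsWalk.contractSteps {o o' : (G.msubdiv x y).V}
    {l : List ((G.msubdiv x y).E × Option G.V)} (h : (G.msubdiv x y).IsWalk o o' l)
    (hnd : (o :: l.map Prod.snd).Nodup) {u z : G.V} (hz : o' = some z)
    (hu : o = some u ∨ o = none ∧ u ∈ s(x, y) ∧ some u ∉ l.map Prod.snd) :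
    G.IsWalk u z (contractSteps lam lam' l) := by
  induction h generalizing u with
  | nil =>
    obtain rfl | ⟨rfl, -⟩ := hu
    · cases Option.some_injective _ hz
      exact .nil _
    · exact (Option.some_ne_none _ hz.symm).elim
  | @cons o ow o' m l he hl ih =>
    rw [List.map_cons, List.nodup_cons] at hnd
    rcases ow with _ | w
    · obtain ⟨u', rfl⟩ :=
        Option.ne_none_iff_exists'.1 fun ho => hnd.1 (ho ▸ List.mem_cons_self)
      obtain rfl : u' = u := Option.some_injective _ (hu.resolve_right (by simp))
      exact ih hnd.2 hz (.inr ⟨rfl, mem_of_msubdiv_ends_eq he, fun h => hnd.1 (.tail _ h)⟩)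
    · refine .cons (ends_contractEdge he (hu.imp_right ?_)) (ih hnd.2 hz (.inl rfl))
      exact fun ⟨ho, hux, hu⟩ => ⟨ho, hux, fun huw => hu (huw ▸ List.mem_cons_self)⟩

theorem IsMSubdivTime.map_contractSteps_sublist (hlam : IsMSubdivTime lam lam')
    (l : List ((G.msubdiv x y).E × Option G.V)) :
    ((contractSteps lam lam' l).map (lam ∘ Prod.fst)).Sublist (l.map (lam' ∘ Prod.fst)) := by
  induction l with
  | nil => exact .slnil
  | cons p l ih =>
    rcases p with ⟨m, _ | w⟩
    · exact ih.cons _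
    · simpa [contractSteps, hlam.lam_contractEdge] using ih.cons_cons (lam' m)

theorem map_snd_contractSteps (l : List ((G.msubdiv x y).E × Option G.V)) :
    (contractSteps lam lam' l).map Prod.snd = (l.map Prod.snd).reduceOption := by
  simp [contractSteps, List.map_filterMap, List.reduceOption, List.filterMap_map, Function.comp_def]

end Multigraph

section MSubdiv

open Multigraph

variable {G : Multigraph} {x y : G.V} {lam : G.E → ℕ} {lam' : (G.msubdiv x y).E → ℕ}

theorem IsTemporalPath.subdiv (hlam : IsMSubdivTime lam lam') {s z : G.V}
    {l : List (G.E × G.V)} (h : IsTemporalPath G lam s z l) :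
    IsTemporalPath (G.msubdiv x y) lam' (some s) (some z) (l.flatMap (subdivStep lam lam')) ∧
      (l.flatMap (subdivStep lam lam')).map (lam' ∘ Prod.fst) ⊆ l.map (lam ∘ Prod.fst) :=
  ⟨⟨h.isWalk.flatMap (H := G.msubdiv x y) some fun _ _ _ he => isWalk_subdivStep he,
    h.isWalk.nodup_flatMap_subdivStep h.nodup, hlam.sorted_flatMap_subdivStep h.sorted⟩,
    hlam.map_flatMap_subdivStep_subset l⟩

theorem IsTemporalPath.contract (hlam : IsMSubdivTime lam lam') {s z : G.V}
    {l : List ((G.msubdiv x y).E × Option G.V)}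
    (h : IsTemporalPath (G.msubdiv x y) lam' (some s) (some z) l) :
    IsTemporalPath G lam s z (contractSteps lam lam' l) ∧
      (contractSteps lam lam' l).map (lam ∘ Prod.fst) ⊆ l.map (lam' ∘ Prod.fst) := by
  have hsub := hlam.map_contractSteps_sublist l
  refine ⟨⟨h.isWalk.contractSteps h.nodup rfl (.inl rfl), ?_, h.sorted.sublist hsub⟩,
    hsub.subset⟩
  rw [map_snd_contractSteps, ← List.reduceOption_cons_of_some]
  exact h.nodup.filterMap fun _ _ _ hb hb' =>
    (Option.mem_def.1 hb).trans (Option.mem_def.1 hb').symm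

end MSubdiv

theorem stmt2_general (G : Multigraph) (x y : G.V)
    (lam : G.E → ℕ)
    (lam' : (G.msubdiv x y).E → ℕ)
    (hkeep : ∀ (e : G.E) (h : G.ends e ≠ s(x, y)), lam' (Sum.inl ⟨e, h⟩) = lam e)
    (hDx : Set.range (fun d : {e : G.E // G.ends e = s(x, y)} => lam' (Sum.inr (d, true)))
        = Set.range (fun d : {e : G.E // G.ends e = s(x, y)} => lam d.1))
    (hDy : Set.range (fun d : {e : G.E // G.ends e = s(x, y)} => lam' (Sum.inr (d, false)))
        = Set.range (fun d : {e : G.E // G.ends e = s(x, y)} => lam d.1)) :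
    ∀ s z : G.V, s ≠ z →
      maxD G lam s z = maxD (G.msubdiv x y) lam' (some s) (some z) ∧
      minC G lam s z = minC (G.msubdiv x y) lam' (some s) (some z) := by
  intro s z hsz
  have hlam : Multigraph.IsMSubdivTime lam lam' := ⟨hkeep, Bool.forall_bool.2 ⟨hDy, hDx⟩⟩
  have hsz' : (some s : (G.msubdiv x y).V) ≠ some z := (Option.some_injective _).ne hsz
  have subdiv : ∀ P : TPath G lam s z,
      ∃ Q : TPath (G.msubdiv x y) lam' (some s) (some z), Q.times ⊆ P.times :=
    TPath.exists_times_subset fun _ hl => ⟨_, hl.subdiv hlam⟩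
  have contract : ∀ Q : TPath (G.msubdiv x y) lam' (some s) (some z),
      ∃ P : TPath G lam s z, P.times ⊆ Q.times :=
    TPath.exists_times_subset fun _ hl => ⟨_, hl.contract hlam⟩
  exact ⟨(maxD_le_maxD hsz' subdiv).antisymm (maxD_le_maxD hsz contract),
    (minC_le_minC hsz' subdiv).antisymm (minC_le_minC hsz contract)⟩

/-- m-subdividing a multiedge `xy`, with any timefunction `λ'` agreeing with
`λ` outside `D` and whose label sets on `D_x` and `D_y` both equal `λ(D)`, preserves both
`maxD` and `minC`. -/
theorem stmt2 (G : Multigraph) (x y : G.V) (hxy : ∃ e, G.ends e = s(x, y))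
    (lam : G.E → ℕ) (hpos : ∀ e, 0 < lam e)
    (lam' : (G.msubdiv x y).E → ℕ) (hpos' : ∀ e, 0 < lam' e)
    (hkeep : ∀ (e : G.E) (h : G.ends e ≠ s(x, y)), lam' (Sum.inl ⟨e, h⟩) = lam e)
    (hDx : Set.range (fun d : {e : G.E // G.ends e = s(x, y)} => lam' (Sum.inr (d, true)))
        = Set.range (fun d : {e : G.E // G.ends e = s(x, y)} => lam d.1))
    (hDy : Set.range (fun d : {e : G.E // G.ends e = s(x, y)} => lam' (Sum.inr (d, false)))
        = Set.range (fun d : {e : G.E // G.ends e = s(x, y)} => lam d.1)) :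
    ∀ s z : G.V, s ≠ z →
      maxD G lam s z = maxD (G.msubdiv x y) lam' (some s) (some z) ∧
      minC G lam s z = minC (G.msubdiv x y) lam' (some s) (some z) :=
  stmt2_general G x y lam lam' hkeep hDx hDy
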